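/- Let G be a non-trivial topological group acting continuously, faithfully, locally decomposably and minimally by homeomorphisms on a compact zero-dimensional space X. Then the following are equivalent: (i) the action is non-discretely micro-supported; (ii) G has trivial quasicentre; (iii) G is not discrete. -/

import Mathlib

/-- The rigid stabiliser of `U ⊆ X` in `G`: elements acting trivially outside `U`. -/
def rist (G : Type*) {X : Type*} [Group G] [MulAction G X] (U : Set X) : Subgroup G where
  carrier := {g | ∀ x ∉ U, g • x = x}
  one_mem' := fun x _ => one_smul G x
  mul_mem' := fun {a b} ha hb x hx => by rw [mul_smul, hb x hx, ha x hx]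
  inv_mem' := fun {a} ha x hx => by
    have h2 : a⁻¹ • (a • x) = a⁻¹ • x := by rw [ha x hx]
    rw [inv_smul_smul] at h2
    exact h2.symm

/-- The action of the topological group `G` on `X` is locally decomposable: for every finite
clopen partition of `X`, the product of the rigid stabilisers of the parts is open in `G` and
carries the product topology, i.e. the multiplication map from the direct product of the
rigid stabilisers to `G` is an injective continuous open map. -/
def LocallyDecomposableSMul (G X : Type*) [Group G] [TopologicalSpace G]
    [TopologicalSpace X] [MulAction G X] : Prop :=
  ∀ (n : ℕ) (α : Fin n → Set X), (∀ i, IsClopen (α i)) →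
    Pairwise (Function.onFun Disjoint α) → (⋃ i, α i) = Set.univ →
    Function.Injective (fun f : (∀ i, rist G (α i)) => (List.ofFn fun i => ((f i : G))).prod) ∧
    Continuous (fun f : (∀ i, rist G (α i)) => (List.ofFn fun i => ((f i : G))).prod) ∧
    IsOpenMap (fun f : (∀ i, rist G (α i)) => (List.ofFn fun i => ((f i : G))).prod)

/-!
If `g ≠ 1` has open centraliser, faithfulness and zero-dimensionality give a clopen `α` with
`α ∩ g • α = ∅`. An element of `rist G α` commuting with `g` lies in `rist G (g • α)` too, hence is
trivial, so `rist G α` meets the open centraliser of `g` only in `1` and is discrete.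

Conversely, if `rist G α` is discrete, minimality and compactness give a finite clopen partition of
`X` whose parts lie in translates of `α`. Their rigid stabilisers are conjugate to subgroups of
`rist G α`, hence discrete, and local decomposability maps the discrete product of them openly onto
a neighbourhood of `1`, so `G` is discrete. A non-trivial discrete group has non-trivial quasicentre.
-/

open Pointwise TopologicalSpace
open scoped Function

section Rist

variable {G X : Type*} [Group G] [MulAction G X]

lemma rist_mono {U V : Set X} (h : U ⊆ V) : rist G U ≤ rist G V :=
  fun _ hg x hx => hg x fun hxU => hx (h hxU)

lemma conj_mem_rist_smul {h : G} {α : Set X} (hh : h ∈ rist G α) (g : G) :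
    g * h * g⁻¹ ∈ rist G (g • α) := by
  intro x hx
  have hfix : h • g⁻¹ • x = g⁻¹ • x :=
    hh _ fun hmem => hx (Set.mem_smul_set_iff_inv_smul_mem.mpr hmem)
  rw [mul_smul, mul_smul, hfix, smul_inv_smul]

lemma rist_inf_rist_eq_bot [FaithfulSMul G X] {α β : Set X} (h : Disjoint α β) :
    rist G α ⊓ rist G β = ⊥ := by
  refine eq_bot_iff.mpr fun g ⟨hα, hβ⟩ => Subgroup.mem_bot.mpr <|
    eq_of_smul_eq_smul (α := X) fun x => ?_
  rw [one_smul]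
  by_cases hx : x ∈ α
  · exact hβ x (h.notMem_of_mem_left hx)
  · exact hα x hx

lemma rist_inf_centralizer_le (α : Set X) (g : G) :
    rist G α ⊓ Subgroup.centralizer {g} ≤ rist G (g • α) := by
  rintro h ⟨hα, hc⟩
  have hcomm : g * h * g⁻¹ = h := by
    rw [← Subgroup.mem_centralizer_singleton_iff.mp hc, mul_inv_cancel_right]
  exact hcomm ▸ conj_mem_rist_smul hα g

end Rist

lemma exists_isClopen_mem_disjoint_smul {G X : Type*} [Group G] [MulAction G X]
    [TopologicalSpace X] [TotallySeparatedSpace X] [ContinuousConstSMul G X]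
    {g : G} {x : X} (hx : g • x ≠ x) :
    ∃ α : Set X, IsClopen α ∧ x ∈ α ∧ Disjoint α (g • α) := by
  obtain ⟨V, hV, hxV, hgxV⟩ := exists_isClopen_of_totally_separated hx.symm
  refine ⟨V \ g⁻¹ • V, hV.diff ⟨hV.1.smul g⁻¹, hV.2.smul g⁻¹⟩, ⟨hxV, ?_⟩, ?_⟩
  · rwa [Set.mem_smul_set_iff_inv_smul_mem, inv_inv]
  · refine Set.disjoint_left.mpr fun y hy hgy => ?_
    obtain ⟨z, ⟨-, hgz⟩, rfl⟩ := hgy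
    exact hgz (by rw [Set.mem_smul_set_iff_inv_smul_mem, inv_inv]; exact hy.1)

section Discrete

variable {G : Type*} [Group G] [TopologicalSpace G]

lemma Subgroup.discreteTopology_of_le {H K : Subgroup G} (hle : H ≤ K) [DiscreteTopology K] :
    DiscreteTopology H :=
  DiscreteTopology.of_continuous_injective (continuous_subtype_val.subtype_mk _)
    (Subgroup.inclusion_injective hle)

variable [IsTopologicalGroup G]

lemma Subgroup.discreteTopology_of_inf_eq_bot {H U : Subgroup G} (hU : IsOpen (U : Set G))
    (h : H ⊓ U = ⊥) : DiscreteTopology H := by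
  rw [discreteTopology_iff_isOpen_singleton_one]
  convert hU.preimage continuous_subtype_val
  ext ⟨x, hx⟩
  simp only [Set.mem_singleton_iff, Set.mem_preimage, SetLike.mem_coe]
  constructor
  · rintro ⟨⟩
    exact U.one_mem
  · exact fun hxU => Subtype.ext (Subgroup.mem_bot.mp (h ▸ ⟨hx, hxU⟩))

lemma discreteTopology_rist_smul {X : Type*} [MulAction G X] {α : Set X}
    [DiscreteTopology (rist G α)] (g : G) : DiscreteTopology (rist G (g • α)) := by
  refine DiscreteTopology.of_continuous_injective
    (f := fun h => (⟨g⁻¹ * h * g, by simpa using conj_mem_rist_smul h.2 g⁻¹⟩ : rist G α)) ?_ ?_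
  · fun_prop
  · intro h k hhk
    simpa using congrArg Subtype.val hhk

end Discrete

lemma LocallyDecomposableSMul.isOpen_singleton_one_of_partition {G X : Type*} [Group G]
    [TopologicalSpace G] [TopologicalSpace X] [MulAction G X] (hld : LocallyDecomposableSMul G X)
    {n : ℕ} {β : Fin n → Set X} (hβ : ∀ i, IsClopen (β i)) (hdisj : Pairwise (Disjoint on β))
    (hcover : ⋃ i, β i = Set.univ) [∀ i, DiscreteTopology (rist G (β i))] :
    IsOpen ({1} : Set G) := by
  obtain ⟨-, -, hopen⟩ := hld n β hβ hdisj hcover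
  simpa [List.ofFn_const] using hopen {1} (isOpen_discrete _)

theorem isOpen_singleton_one_of_discreteTopology_rist {G X : Type*} [Group G]
    [TopologicalSpace G] [IsTopologicalGroup G] [TopologicalSpace X] [CompactSpace X] [T2Space X]
    [TotallyDisconnectedSpace X] [MulAction G X] [ContinuousConstSMul G X]
    [MulAction.IsMinimal G X] (hld : LocallyDecomposableSMul G X) {α : Set X} (hα : IsOpen α)
    (hne : α.Nonempty) [DiscreteTopology (rist G α)] : IsOpen ({1} : Set G) := by
  have hU : IsOpenCover fun g : G => (⟨g • α, hα.smul g⟩ : Opens X) :=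
    .of_sets _ (hα.iUnion_smul G hne)
  obtain ⟨n, W, hW, hcover, hdisj⟩ := hU.exists_finite_nonempty_disjoint_clopen_cover
  have (i : Fin n) : DiscreteTopology (rist G (W i : Set X)) := by
    obtain ⟨g, hg⟩ := (hW i).2
    have := discreteTopology_rist_smul (α := α) g
    exact Subgroup.discreteTopology_of_le (rist_mono hg)
  exact hld.isOpen_singleton_one_of_partition (fun i => (W i).isClopen)
    (fun i j hij => Clopens.coe_disjoint.mpr (hdisj hij)) (Set.univ_subset_iff.mp hcover)

theorem exists_discreteTopology_rist_of_isOpen_centralizer {G X : Type*} [Group G]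
    [TopologicalSpace G] [IsTopologicalGroup G] [TopologicalSpace X] [TotallySeparatedSpace X]
    [MulAction G X] [ContinuousConstSMul G X] [FaithfulSMul G X] {g : G} (hg1 : g ≠ 1)
    (hg : IsOpen (Subgroup.centralizer {g} : Set G)) :
    ∃ α : Set X, IsClopen α ∧ α.Nonempty ∧ DiscreteTopology (rist G α) := by
  obtain ⟨x, hx⟩ : ∃ x : X, g • x ≠ x := by
    by_contra! hfix
    exact hg1 (eq_of_smul_eq_smul fun x : X => by rw [hfix, one_smul])
  obtain ⟨α, hα, hxα, hdisj⟩ := exists_isClopen_mem_disjoint_smul hx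
  have hbot : rist G α ⊓ Subgroup.centralizer {g} = ⊥ := eq_bot_iff.mpr <|
    (le_inf inf_le_left (rist_inf_centralizer_le α g)).trans (rist_inf_rist_eq_bot hdisj).le
  exact ⟨α, hα, ⟨x, hxα⟩, Subgroup.discreteTopology_of_inf_eq_bot hg hbot⟩

/-- **Non-discreteness criteria for locally decomposable minimal actions.**
Let `G` be a non-trivial topological group acting continuously, faithfully, locally
decomposably and minimally on a compact zero-dimensional space `X`.  Then the following are
equivalent: (i) the action is non-discretely micro-supported (no rigid stabiliser of a
nonempty clopen set is discrete); (ii) `G` has trivial quasicentre (no non-trivial element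
has open centraliser); (iii) `G` is not discrete. -/
theorem nondiscretely_microsupported_iff_trivial_quasicentre_iff_nondiscrete
    {G X : Type*} [Group G] [TopologicalSpace G] [IsTopologicalGroup G] [Nontrivial G]
    [TopologicalSpace X] [CompactSpace X] [T2Space X] [TotallyDisconnectedSpace X]
    [MulAction G X] [ContinuousSMul G X] [FaithfulSMul G X]
    (hld : LocallyDecomposableSMul G X)
    (hmin : ∀ x : X, Dense (MulAction.orbit G x)) :
    ((∀ α : Set X, IsClopen α → α.Nonempty → ¬ IsOpen ({1} : Set (rist G α))) ↔
      (∀ g : G, IsOpen ((Subgroup.centralizer {g} : Subgroup G) : Set G) → g = 1)) ∧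
    ((∀ g : G, IsOpen ((Subgroup.centralizer {g} : Subgroup G) : Set G) → g = 1) ↔
      ¬ IsOpen ({1} : Set G)) := by
  have : MulAction.IsMinimal G X := ⟨hmin⟩
  have ms_qz : (∀ α : Set X, IsClopen α → α.Nonempty → ¬ IsOpen ({1} : Set (rist G α))) →
      ∀ g : G, IsOpen ((Subgroup.centralizer {g} : Subgroup G) : Set G) → g = 1 := by
    intro hms g hg
    by_contra hg1
    obtain ⟨α, hα, hne, hdisc⟩ :=
      exists_discreteTopology_rist_of_isOpen_centralizer (X := X) hg1 hg
    exact hms α hα hne (discreteTopology_iff_isOpen_singleton_one.mp hdisc)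
  have qz_nd : (∀ g : G, IsOpen ((Subgroup.centralizer {g} : Subgroup G) : Set G) → g = 1) →
      ¬ IsOpen ({1} : Set G) := by
    intro hqz hdisc
    have := discreteTopology_of_isOpen_singleton_one hdisc
    obtain ⟨g, hg⟩ := exists_ne (1 : G)
    exact hg (hqz g (isOpen_discrete _))
  have nd_ms : ¬ IsOpen ({1} : Set G) →
      ∀ α : Set X, IsClopen α → α.Nonempty → ¬ IsOpen ({1} : Set (rist G α)) := by
    intro hnd α hα hne hdisc
    have := discreteTopology_of_isOpen_singleton_one hdisc
    exact hnd (isOpen_singleton_one_of_discreteTopology_rist hld hα.isOpen hne)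
  exact ⟨⟨ms_qz, nd_ms ∘ qz_nd⟩, ⟨qz_nd, ms_qz ∘ nd_ms⟩⟩
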